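/- The tensor product ansatz solves the two-component Boltzmann hierarchy: suppose $g, h : [0,T] \times \mathbb{R}^d \times \mathbb{R}^d \to \mathbb{R}$ are smooth and satisfy the coupled system $\partial_t g + v\cdot\nabla_x g = A^{(1,0)}_{(1,0)} Q^{(1,0)}_{(1,0)}(g,g) + A^{(1,0)}_{(0,1)} Q^{(1,0)}_{(0,1)}(g,h)$ and $\partial_t h + v\cdot\nabla_x h = A^{(0,1)}_{(0,1)} Q^{(0,1)}_{(0,1)}(h,h) + A^{(0,1)}_{(1,0)} Q^{(0,1)}_{(1,0)}(h,g)$. Then for each $(s_1, s_2) \in \mathbb{N}_+^2$, the tensor $f^{(s_1,s_2)}(t, Z_{(s_1,s_2)}) := \prod_{k=1}^{s_1} g(t,x_k,v_k) \prod_{k=1}^{s_2} h(t,y_k,w_k)$ satisfies the Boltzmann hierarchy equation $\big(\partial_t + \sum_{k=1}^{s_1} v_k\cdot\nabla_{x_k} + \sum_{k=1}^{s_2} w_k\cdot\nabla_{y_k}\big) f^{(s_1,s_2)} = \sum_{\alpha,\beta} \mathscr{C}^{\alpha}_{(s_1,s_2),(s_1,s_2)+\beta} f^{(s_1,s_2)+\beta}$.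 -/

import Mathlib

open MeasureTheory
open scoped InnerProductSpace

noncomputable section

/-- Euclidean space `ℝ^d`. -/
abbrev Euc (d : ℕ) := EuclideanSpace ℝ (Fin d)

/-- The Boltzmann collision operator `Q^α_β(G,H)` for a mixture, with masses
`Mα`, `Mβ` and the mass-weighted elastic collision law. -/
def collQ (d : ℕ) (Mα Mβ : ℝ) (G H : ℝ → Euc d → Euc d → ℝ)
    (t : ℝ) (x v : Euc d) : ℝ :=
  ∫ vβ : Euc d, ∫ θ in Metric.sphere (0 : Euc d) 1,
      max (⟪vβ - v, θ⟫_ℝ) 0 *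
        (G t x (v - ((2 * Mβ / (Mα + Mβ)) * ⟪v - vβ, θ⟫_ℝ) • θ) *
            H t x (vβ + ((2 * Mα / (Mα + Mβ)) * ⟪v - vβ, θ⟫_ℝ) • θ)
          - G t x v * H t x vβ)
    ∂(μH[(d : ℝ) - 1]) ∂volume

/-- The tensor product ansatz `f^{(s₁,s₂)} = g^{⊗s₁} ⊗ h^{⊗s₂}`. -/
def tensorF (d : ℕ) (g h : ℝ → Euc d → Euc d → ℝ) (s₁ s₂ : ℕ) (t : ℝ)
    (X : Fin s₁ → Euc d) (Y : Fin s₂ → Euc d)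
    (V : Fin s₁ → Euc d) (W : Fin s₂ → Euc d) : ℝ :=
  (∏ k, g t (X k) (V k)) * (∏ k, h t (Y k) (W k))

/-- Hierarchy collision operator `𝒞^{(1,0)}_{(s₁,s₂),(s₁,s₂)+(1,0)}` applied to the
tensor ansatz: a new type-1 particle collides with each existing type-1 particle. -/
def hierC11 (d : ℕ) (M₁ A : ℝ) (g h : ℝ → Euc d → Euc d → ℝ) (s₁ s₂ : ℕ) (t : ℝ)
    (X : Fin s₁ → Euc d) (Y : Fin s₂ → Euc d)
    (V : Fin s₁ → Euc d) (W : Fin s₂ → Euc d) : ℝ :=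
  A * ∑ i : Fin s₁, ∫ v' : Euc d, ∫ θ in Metric.sphere (0 : Euc d) 1,
      max (⟪v' - V i, θ⟫_ℝ) 0 *
        (tensorF d g h (s₁ + 1) s₂ t (Fin.snoc X (X i)) Y
            (Fin.snoc
              (Function.update V i
                (V i - ((2 * M₁ / (M₁ + M₁)) * ⟪V i - v', θ⟫_ℝ) • θ))
              (v' + ((2 * M₁ / (M₁ + M₁)) * ⟪V i - v', θ⟫_ℝ) • θ)) W
          - tensorF d g h (s₁ + 1) s₂ t (Fin.snoc X (X i)) Y (Fin.snoc V v') W)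
    ∂(μH[(d : ℝ) - 1]) ∂volume

/-- Hierarchy collision operator `𝒞^{(1,0)}_{(s₁,s₂),(s₁,s₂)+(0,1)}` applied to the
tensor ansatz: a new type-2 particle collides with each existing type-1 particle. -/
def hierC12 (d : ℕ) (M₁ M₂ A : ℝ) (g h : ℝ → Euc d → Euc d → ℝ) (s₁ s₂ : ℕ) (t : ℝ)
    (X : Fin s₁ → Euc d) (Y : Fin s₂ → Euc d)
    (V : Fin s₁ → Euc d) (W : Fin s₂ → Euc d) : ℝ :=
  A * ∑ i : Fin s₁, ∫ w' : Euc d, ∫ θ in Metric.sphere (0 : Euc d) 1,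
      max (⟪w' - V i, θ⟫_ℝ) 0 *
        (tensorF d g h s₁ (s₂ + 1) t X (Fin.snoc Y (X i))
            (Function.update V i
              (V i - ((2 * M₂ / (M₁ + M₂)) * ⟪V i - w', θ⟫_ℝ) • θ))
            (Fin.snoc W (w' + ((2 * M₁ / (M₁ + M₂)) * ⟪V i - w', θ⟫_ℝ) • θ))
          - tensorF d g h s₁ (s₂ + 1) t X (Fin.snoc Y (X i)) V (Fin.snoc W w'))
    ∂(μH[(d : ℝ) - 1]) ∂volume

/-- Hierarchy collision operator `𝒞^{(0,1)}_{(s₁,s₂),(s₁,s₂)+(1,0)}` applied to the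
tensor ansatz: a new type-1 particle collides with each existing type-2 particle. -/
def hierC21 (d : ℕ) (M₁ M₂ A : ℝ) (g h : ℝ → Euc d → Euc d → ℝ) (s₁ s₂ : ℕ) (t : ℝ)
    (X : Fin s₁ → Euc d) (Y : Fin s₂ → Euc d)
    (V : Fin s₁ → Euc d) (W : Fin s₂ → Euc d) : ℝ :=
  A * ∑ i : Fin s₂, ∫ v' : Euc d, ∫ θ in Metric.sphere (0 : Euc d) 1,
      max (⟪v' - W i, θ⟫_ℝ) 0 *
        (tensorF d g h (s₁ + 1) s₂ t (Fin.snoc X (Y i)) Y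
            (Fin.snoc V (v' + ((2 * M₂ / (M₁ + M₂)) * ⟪W i - v', θ⟫_ℝ) • θ))
            (Function.update W i
              (W i - ((2 * M₁ / (M₁ + M₂)) * ⟪W i - v', θ⟫_ℝ) • θ))
          - tensorF d g h (s₁ + 1) s₂ t (Fin.snoc X (Y i)) Y (Fin.snoc V v') W)
    ∂(μH[(d : ℝ) - 1]) ∂volume

/-- Hierarchy collision operator `𝒞^{(0,1)}_{(s₁,s₂),(s₁,s₂)+(0,1)}` applied to the
tensor ansatz: a new type-2 particle collides with each existing type-2 particle. -/
def hierC22 (d : ℕ) (M₂ A : ℝ) (g h : ℝ → Euc d → Euc d → ℝ) (s₁ s₂ : ℕ) (t : ℝ)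
    (X : Fin s₁ → Euc d) (Y : Fin s₂ → Euc d)
    (V : Fin s₁ → Euc d) (W : Fin s₂ → Euc d) : ℝ :=
  A * ∑ i : Fin s₂, ∫ w' : Euc d, ∫ θ in Metric.sphere (0 : Euc d) 1,
      max (⟪w' - W i, θ⟫_ℝ) 0 *
        (tensorF d g h s₁ (s₂ + 1) t X (Fin.snoc Y (Y i)) V
            (Fin.snoc
              (Function.update W i
                (W i - ((2 * M₂ / (M₂ + M₂)) * ⟪W i - w', θ⟫_ℝ) • θ))
              (w' + ((2 * M₂ / (M₂ + M₂)) * ⟪W i - w', θ⟫_ℝ) • θ))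
          - tensorF d g h s₁ (s₂ + 1) t X (Fin.snoc Y (Y i)) V (Fin.snoc W w'))
    ∂(μH[(d : ℝ) - 1]) ∂volume


private lemma prod_update_right' {d n : ℕ} (G : Euc d → Euc d → ℝ) (X V : Fin n → Euc d)
    (i : Fin n) (v : Euc d) :
    ∏ k, G (X k) (Function.update V i v k)
      = (∏ k ∈ Finset.univ.erase i, G (X k) (V k)) * G (X i) v := by
  classical
  have h1 : ∀ k, G (X k) (Function.update V i v k)
      = Function.update (fun k => G (X k) (V k)) i (G (X i) v) k := by
    intro k
    rcases eq_or_ne k i with rfl | hk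
    · simp
    · simp [Function.update_of_ne hk]
  calc ∏ k, G (X k) (Function.update V i v k)
      = ∏ k, Function.update (fun k => G (X k) (V k)) i (G (X i) v) k :=
        Finset.prod_congr rfl fun k _ => h1 k
    _ = _ := by
        rw [Finset.prod_update_of_mem (Finset.mem_univ i)]
        rw [Finset.sdiff_singleton_eq_erase, mul_comm]

private lemma prod_update_left' {d n : ℕ} (G : Euc d → Euc d → ℝ) (X V : Fin n → Euc d)
    (i : Fin n) (x : Euc d) :
    ∏ k, G (Function.update X i x k) (V k)
      = (∏ k ∈ Finset.univ.erase i, G (X k) (V k)) * G x (V i) :=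
  prod_update_right' (fun a b => G b a) V X i x

private lemma prod_snoc' {d n : ℕ} (G : Euc d → Euc d → ℝ) (X V : Fin n → Euc d)
    (a v : Euc d) :
    ∏ k : Fin (n + 1), G ((Fin.snoc X a : Fin (n+1) → Euc d) k)
        ((Fin.snoc V v : Fin (n+1) → Euc d) k)
      = (∏ k, G (X k) (V k)) * G a v := by
  simp [Fin.prod_univ_castSucc]

private lemma hierC11_eq (d : ℕ) (M₁ A : ℝ) (g h : ℝ → Euc d → Euc d → ℝ) (s₁ s₂ : ℕ) (t : ℝ)
    (X : Fin s₁ → Euc d) (Y : Fin s₂ → Euc d)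
    (V : Fin s₁ → Euc d) (W : Fin s₂ → Euc d) :
    hierC11 d M₁ A g h s₁ s₂ t X Y V W
      = A * ∑ i : Fin s₁,
          ((∏ k ∈ Finset.univ.erase i, g t (X k) (V k)) * ∏ k, h t (Y k) (W k))
            * collQ d M₁ M₁ g g t (X i) (V i) := by
  unfold hierC11 collQ
  congr 1
  refine Finset.sum_congr rfl fun i _ => ?_
  rw [← MeasureTheory.integral_const_mul]
  refine MeasureTheory.integral_congr_ae (Filter.Eventually.of_forall fun v' => ?_)
  dsimp only
  rw [← MeasureTheory.integral_const_mul]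
  refine MeasureTheory.integral_congr_ae (Filter.Eventually.of_forall fun θ => ?_)
  simp only [tensorF]
  rw [prod_snoc', prod_snoc', prod_update_right',
    ← Finset.mul_prod_erase Finset.univ _ (Finset.mem_univ i)]
  ring

private lemma hierC12_eq (d : ℕ) (M₁ M₂ A : ℝ) (g h : ℝ → Euc d → Euc d → ℝ) (s₁ s₂ : ℕ) (t : ℝ)
    (X : Fin s₁ → Euc d) (Y : Fin s₂ → Euc d)
    (V : Fin s₁ → Euc d) (W : Fin s₂ → Euc d) :
    hierC12 d M₁ M₂ A g h s₁ s₂ t X Y V W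
      = A * ∑ i : Fin s₁,
          ((∏ k ∈ Finset.univ.erase i, g t (X k) (V k)) * ∏ k, h t (Y k) (W k))
            * collQ d M₁ M₂ g h t (X i) (V i) := by
  unfold hierC12 collQ
  congr 1
  refine Finset.sum_congr rfl fun i _ => ?_
  rw [← MeasureTheory.integral_const_mul]
  refine MeasureTheory.integral_congr_ae (Filter.Eventually.of_forall fun w' => ?_)
  dsimp only
  rw [← MeasureTheory.integral_const_mul]
  refine MeasureTheory.integral_congr_ae (Filter.Eventually.of_forall fun θ => ?_)
  simp only [tensorF]
  rw [prod_update_right', prod_snoc', prod_snoc',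
    ← Finset.mul_prod_erase Finset.univ _ (Finset.mem_univ i)]
  ring

private lemma hierC21_eq (d : ℕ) (M₁ M₂ A : ℝ) (g h : ℝ → Euc d → Euc d → ℝ) (s₁ s₂ : ℕ) (t : ℝ)
    (X : Fin s₁ → Euc d) (Y : Fin s₂ → Euc d)
    (V : Fin s₁ → Euc d) (W : Fin s₂ → Euc d) :
    hierC21 d M₁ M₂ A g h s₁ s₂ t X Y V W
      = A * ∑ j : Fin s₂,
          ((∏ k, g t (X k) (V k)) * ∏ k ∈ Finset.univ.erase j, h t (Y k) (W k))
            * collQ d M₂ M₁ h g t (Y j) (W j) := by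
  unfold hierC21 collQ
  congr 1
  refine Finset.sum_congr rfl fun j _ => ?_
  rw [← MeasureTheory.integral_const_mul]
  refine MeasureTheory.integral_congr_ae (Filter.Eventually.of_forall fun v' => ?_)
  dsimp only
  rw [← MeasureTheory.integral_const_mul]
  refine MeasureTheory.integral_congr_ae (Filter.Eventually.of_forall fun θ => ?_)
  simp only [tensorF]
  rw [prod_snoc', prod_snoc', prod_update_right',
    ← Finset.mul_prod_erase Finset.univ _ (Finset.mem_univ j)]
  ring

private lemma hierC22_eq (d : ℕ) (M₂ A : ℝ) (g h : ℝ → Euc d → Euc d → ℝ) (s₁ s₂ : ℕ) (t : ℝ)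
    (X : Fin s₁ → Euc d) (Y : Fin s₂ → Euc d)
    (V : Fin s₁ → Euc d) (W : Fin s₂ → Euc d) :
    hierC22 d M₂ A g h s₁ s₂ t X Y V W
      = A * ∑ j : Fin s₂,
          ((∏ k, g t (X k) (V k)) * ∏ k ∈ Finset.univ.erase j, h t (Y k) (W k))
            * collQ d M₂ M₂ h h t (Y j) (W j) := by
  unfold hierC22 collQ
  congr 1
  refine Finset.sum_congr rfl fun j _ => ?_
  rw [← MeasureTheory.integral_const_mul]
  refine MeasureTheory.integral_congr_ae (Filter.Eventually.of_forall fun w' => ?_)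
  dsimp only
  rw [← MeasureTheory.integral_const_mul]
  refine MeasureTheory.integral_congr_ae (Filter.Eventually.of_forall fun θ => ?_)
  simp only [tensorF]
  rw [prod_snoc', prod_snoc', prod_update_right',
    ← Finset.mul_prod_erase Finset.univ _ (Finset.mem_univ j)]
  ring

/-- The tensor product ansatz built from a smooth solution `(g, h)` of the
two-component Boltzmann system solves the two-component Boltzmann hierarchy. -/
theorem tensor_ansatz_solves_boltzmann_hierarchy
    (d : ℕ) (hd : 1 ≤ d) (M₁ M₂ A₁₁ A₁₂ A₂₁ A₂₂ : ℝ)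
    (hM₁ : 0 < M₁) (hM₂ : 0 < M₂)
    (g h : ℝ → Euc d → Euc d → ℝ)
    (hg_smooth : ContDiff ℝ (⊤ : ℕ∞) (fun p : ℝ × Euc d × Euc d => g p.1 p.2.1 p.2.2))
    (hh_smooth : ContDiff ℝ (⊤ : ℕ∞) (fun p : ℝ × Euc d × Euc d => h p.1 p.2.1 p.2.2))
    (hg : ∀ (t : ℝ) (x v : Euc d),
      deriv (fun τ => g τ x v) t + fderiv ℝ (fun x' => g t x' v) x v =
        A₁₁ * collQ d M₁ M₁ g g t x v + A₁₂ * collQ d M₁ M₂ g h t x v)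
    (hh : ∀ (t : ℝ) (x v : Euc d),
      deriv (fun τ => h τ x v) t + fderiv ℝ (fun x' => h t x' v) x v =
        A₂₂ * collQ d M₂ M₂ h h t x v + A₂₁ * collQ d M₂ M₁ h g t x v)
    (s₁ s₂ : ℕ) (hs₁ : 1 ≤ s₁) (hs₂ : 1 ≤ s₂) :
    ∀ (t : ℝ) (X : Fin s₁ → Euc d) (Y : Fin s₂ → Euc d)
      (V : Fin s₁ → Euc d) (W : Fin s₂ → Euc d),
      deriv (fun τ => tensorF d g h s₁ s₂ τ X Y V W) t
        + (∑ k : Fin s₁,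
            fderiv ℝ (fun x => tensorF d g h s₁ s₂ t (Function.update X k x) Y V W)
              (X k) (V k))
        + (∑ k : Fin s₂,
            fderiv ℝ (fun y => tensorF d g h s₁ s₂ t X (Function.update Y k y) V W)
              (Y k) (W k))
      = hierC11 d M₁ A₁₁ g h s₁ s₂ t X Y V W
          + hierC12 d M₁ M₂ A₁₂ g h s₁ s₂ t X Y V W
          + hierC21 d M₁ M₂ A₂₁ g h s₁ s₂ t X Y V W
          + hierC22 d M₂ A₂₂ g h s₁ s₂ t X Y V W := by
  classical
  intro t X Y V W
  have hgd : Differentiable ℝ (fun p : ℝ × Euc d × Euc d => g p.1 p.2.1 p.2.2) :=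
    hg_smooth.differentiable (by simp)
  have hhd : Differentiable ℝ (fun p : ℝ × Euc d × Euc d => h p.1 p.2.1 p.2.2) :=
    hh_smooth.differentiable (by simp)
  have hgt : ∀ (x v : Euc d), Differentiable ℝ (fun τ => g τ x v) := fun x v =>
    hgd.comp (differentiable_id.prodMk (differentiable_const (x, v)))
  have hht : ∀ (x v : Euc d), Differentiable ℝ (fun τ => h τ x v) := fun x v =>
    hhd.comp (differentiable_id.prodMk (differentiable_const (x, v)))
  have hgx : ∀ (t' : ℝ) (v : Euc d), Differentiable ℝ (fun x => g t' x v) := fun t' v =>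
    hgd.comp ((differentiable_const t').prodMk (differentiable_id.prodMk (differentiable_const v)))
  have hhx : ∀ (t' : ℝ) (v : Euc d), Differentiable ℝ (fun x => h t' x v) := fun t' v =>
    hhd.comp ((differentiable_const t').prodMk (differentiable_id.prodMk (differentiable_const v)))
  -- time derivative
  have hPg : HasDerivAt (fun τ => ∏ k, g τ (X k) (V k))
      (∑ i, (∏ j ∈ Finset.univ.erase i, g t (X j) (V j))
        • deriv (fun τ => g τ (X i) (V i)) t) t :=
    HasDerivAt.fun_finsetProd (fun i _ => ((hgt (X i) (V i)) t).hasDerivAt)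
  have hPh : HasDerivAt (fun τ => ∏ k, h τ (Y k) (W k))
      (∑ j, (∏ k ∈ Finset.univ.erase j, h t (Y k) (W k))
        • deriv (fun τ => h τ (Y j) (W j)) t) t :=
    HasDerivAt.fun_finsetProd (fun j _ => ((hht (Y j) (W j)) t).hasDerivAt)
  have hT : deriv (fun τ => tensorF d g h s₁ s₂ τ X Y V W) t
      = (∑ i, (∏ j ∈ Finset.univ.erase i, g t (X j) (V j))
            • deriv (fun τ => g τ (X i) (V i)) t) * (∏ k, h t (Y k) (W k))
        + (∏ k, g t (X k) (V k)) *
          (∑ j, (∏ k ∈ Finset.univ.erase j, h t (Y k) (W k))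
            • deriv (fun τ => h τ (Y j) (W j)) t) :=
    (hPg.mul hPh).deriv
  -- spatial derivatives
  have hX : ∀ k : Fin s₁,
      fderiv ℝ (fun x => tensorF d g h s₁ s₂ t (Function.update X k x) Y V W) (X k) (V k)
        = ((∏ j ∈ Finset.univ.erase k, g t (X j) (V j)) * ∏ j, h t (Y j) (W j))
            * fderiv ℝ (fun x => g t x (V k)) (X k) (V k) := by
    intro k
    have heq : (fun x => tensorF d g h s₁ s₂ t (Function.update X k x) Y V W)
        = fun x => ((∏ j ∈ Finset.univ.erase k, g t (X j) (V j)) * ∏ j, h t (Y j) (W j))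
            * g t x (V k) := by
      funext x
      simp only [tensorF]
      rw [prod_update_left']
      ring
    rw [heq, fderiv_const_mul ((hgx t (V k)) (X k))]
    simp [smul_eq_mul]
  have hY : ∀ k : Fin s₂,
      fderiv ℝ (fun y => tensorF d g h s₁ s₂ t X (Function.update Y k y) V W) (Y k) (W k)
        = ((∏ j, g t (X j) (V j)) * ∏ j ∈ Finset.univ.erase k, h t (Y j) (W j))
            * fderiv ℝ (fun y => h t y (W k)) (Y k) (W k) := by
    intro k
    have heq : (fun y => tensorF d g h s₁ s₂ t X (Function.update Y k y) V W)
        = fun y => ((∏ j, g t (X j) (V j)) * ∏ j ∈ Finset.univ.erase k, h t (Y j) (W j))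
            * h t y (W k) := by
      funext y
      simp only [tensorF]
      rw [prod_update_left']
      ring
    rw [heq, fderiv_const_mul ((hhx t (W k)) (Y k))]
    simp [smul_eq_mul]
  rw [hT, Finset.sum_congr rfl (fun k _ => hX k), Finset.sum_congr rfl (fun k _ => hY k),
    hierC11_eq, hierC12_eq, hierC21_eq, hierC22_eq]
  simp only [smul_eq_mul, Finset.sum_mul, Finset.mul_sum]
  have hre : ∀ a b c e : ℝ, ((a + b) + c) + e = (a + c) + (b + e) := by intros; ring
  rw [hre, ← Finset.sum_add_distrib, ← Finset.sum_add_distrib]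
  conv_rhs => rw [add_assoc]
  rw [← Finset.sum_add_distrib, ← Finset.sum_add_distrib]
  congr 1
  · refine Finset.sum_congr rfl fun i _ => ?_
    linear_combination ((∏ j ∈ Finset.univ.erase i, g t (X j) (V j))
      * ∏ k, h t (Y k) (W k)) * hg t (X i) (V i)
  · refine Finset.sum_congr rfl fun j _ => ?_
    linear_combination ((∏ k, g t (X k) (V k))
      * ∏ k ∈ Finset.univ.erase j, h t (Y k) (W k)) * hh t (Y j) (W j)


end
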